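/- Suppose Σ⁻¹ = V S₁ Vᵀ and Σ_a = Ṽ S₂ Ṽᵀ with V, Ṽ ∈ ℝ^{d×d} orthogonal, S₁ = Diag(s_i²/σ² + 1 for i ≤ d_y, 1 otherwise), S₂ = Diag(σ²/(s̃_i²+σ²) for i ≤ d_y, 1 otherwise), and the diagonal of Δ := VᵀṼ − I bounded by ε (neglecting the second-order term tr(S₁ Δ S₂ Δᵀ)). Then tr(Σ⁻¹ Σ_a) − d ≤ (1+2ε) Σ_{i≤d_y} (s_i² − s̃_i²)/(s̃_i² + σ²) + 2εd. -/

import Mathlib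

/-!
With `A = Vᵀ Ṽ`, cyclicity of the trace gives `tr(Σ⁻¹ Σ_a) = tr(S₁ A S₂ Aᵀ)`, and removing the
second-order term `tr(S₁ (A - 1) S₂ (A - 1)ᵀ)` leaves `tr(S₁ A S₂) + tr(S₁ S₂ Aᵀ) - tr(S₁ S₂)`.
For diagonal `S₁ = diag f`, `S₂ = diag g` this is `∑ᵢ cᵢ (2 Aᵢᵢ - 1)` with `cᵢ = fᵢ gᵢ ≥ 0`,
so `Aᵢᵢ ≤ 1 + ε` bounds each summand minus one by `(1 + 2ε)(cᵢ - 1) + 2ε`,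
and `cᵢ - 1 = (sᵢ² - s̃ᵢ²)/(s̃ᵢ² + σ²)` for `i < d_y`, `0` otherwise.
-/

open Matrix

namespace Matrix

section CommRing

variable {n R : Type*} [Fintype n] [CommRing R]

theorem trace_conj_mul_conj (V W S T : Matrix n n R) :
    (V * S * Vᵀ * (W * T * Wᵀ)).trace = (S * (Vᵀ * W) * T * (Vᵀ * W)ᵀ).trace := by
  simp only [transpose_mul, transpose_transpose, Matrix.mul_assoc]
  rw [trace_mul_comm]
  simp only [Matrix.mul_assoc]

variable [DecidableEq n]

theorem trace_sub_trace_mul_sub_one_transpose (S T A : Matrix n n R) :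
    (S * A * T * Aᵀ).trace - (S * (A - 1) * T * (A - 1)ᵀ).trace =
      (S * A * T).trace + (S * T * Aᵀ).trace - (S * T).trace := by
  simp only [transpose_sub, transpose_one, Matrix.mul_sub, Matrix.sub_mul, Matrix.mul_one,
    trace_sub]
  ring

theorem trace_diagonal_mul_mul_diagonal (f g : n → R) (A : Matrix n n R) :
    (diagonal f * A * diagonal g).trace = ∑ i, f i * g i * A i i := by
  simp only [trace, diag, mul_diagonal, diagonal_mul]
  exact Finset.sum_congr rfl fun i _ => by ring

theorem trace_diagonal_mul_diagonal_mul_transpose (f g : n → R) (A : Matrix n n R) :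
    (diagonal f * diagonal g * Aᵀ).trace = ∑ i, f i * g i * A i i := by
  simp only [diagonal_mul_diagonal, trace, diag, diagonal_mul, transpose_apply]

end CommRing

theorem trace_first_order_diagonal_le {n : Type*} [Fintype n] [DecidableEq n]
    (f g : n → ℝ) (hfg : ∀ i, 0 ≤ f i * g i) (A : Matrix n n ℝ) (ε : ℝ)
    (hA : ∀ i, A i i ≤ 1 + ε) :
    (diagonal f * A * diagonal g * Aᵀ).trace
        - (diagonal f * (A - 1) * diagonal g * (A - 1)ᵀ).trace - Fintype.card n ≤
      (1 + 2 * ε) * ∑ i, (f i * g i - 1) + 2 * ε * Fintype.card n := by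
  rw [trace_sub_trace_mul_sub_one_transpose, trace_diagonal_mul_mul_diagonal,
    trace_diagonal_mul_diagonal_mul_transpose, diagonal_mul_diagonal, trace_diagonal,
    Finset.mul_sum, Finset.card_univ.symm, Finset.cast_card, Finset.mul_sum,
    ← Finset.sum_add_distrib, ← Finset.sum_add_distrib, ← Finset.sum_sub_distrib,
    ← Finset.sum_sub_distrib]
  refine Finset.sum_le_sum fun i _ => ?_
  nlinarith [mul_le_mul_of_nonneg_left (hA i) (hfg i)]

end Matrix

theorem trace_bound_approx_general {d d_y : ℕ}
    (s st : Fin d → ℝ) (σ ε : ℝ) (hσ : 0 < σ)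
    (V Vt : Matrix (Fin d) (Fin d) ℝ)
    (hdiag : ∀ i, (Vᵀ * Vt) i i ∈ Set.Icc (1 - ε) (1 + ε)) :
    let S₁ : Matrix (Fin d) (Fin d) ℝ :=
      Matrix.diagonal (fun i => if (i : ℕ) < d_y then s i ^ 2 / σ ^ 2 + 1 else 1)
    let S₂ : Matrix (Fin d) (Fin d) ℝ :=
      Matrix.diagonal (fun i => if (i : ℕ) < d_y then σ ^ 2 / (st i ^ 2 + σ ^ 2) else 1)
    let Δ : Matrix (Fin d) (Fin d) ℝ := Vᵀ * Vt - 1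
    ((V * S₁ * Vᵀ) * (Vt * S₂ * Vtᵀ)).trace - (S₁ * Δ * S₂ * Δᵀ).trace - d ≤
      (1 + 2 * ε) *
          ∑ i ∈ Finset.univ.filter (fun i : Fin d => (i : ℕ) < d_y),
            (s i ^ 2 - st i ^ 2) / (st i ^ 2 + σ ^ 2) +
        2 * ε * d := by
  intro S₁ S₂ Δ
  have hweight : ∀ i : Fin d, 0 ≤ (if (i : ℕ) < d_y then s i ^ 2 / σ ^ 2 + 1 else 1) *
      (if (i : ℕ) < d_y then σ ^ 2 / (st i ^ 2 + σ ^ 2) else 1) := fun i => by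
    split_ifs <;> positivity
  have hsum : ∑ i : Fin d, ((if (i : ℕ) < d_y then s i ^ 2 / σ ^ 2 + 1 else 1) *
      (if (i : ℕ) < d_y then σ ^ 2 / (st i ^ 2 + σ ^ 2) else 1) - 1) =
      ∑ i ∈ Finset.univ.filter (fun i : Fin d => (i : ℕ) < d_y),
        (s i ^ 2 - st i ^ 2) / (st i ^ 2 + σ ^ 2) := by
    rw [Finset.sum_filter]
    refine Finset.sum_congr rfl fun i _ => ?_
    split_ifs
    · field_simp
      ring
    · ring
  rw [trace_conj_mul_conj]
  simpa only [hsum, Fintype.card_fin] using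
    trace_first_order_diagonal_le _ _ hweight (Vᵀ * Vt) ε fun i => (hdiag i).2

/-- Trace bound for `tr(Σ⁻¹ Σ_a) − d` in the general setting, neglecting the
second-order term `tr(S₁ Δ S₂ Δᵀ)` in `Δ = Vᵀ Ṽ − I`. -/
theorem trace_bound_approx {d d_y : ℕ} (hd : d_y ≤ d)
    (s st : Fin d → ℝ) (σ ε : ℝ) (hσ : 0 < σ)
    (hs : ∀ i : Fin d, (i : ℕ) < d_y → 0 < s i)
    (hst : ∀ i : Fin d, (i : ℕ) < d_y → 0 < st i)
    (V Vt : Matrix (Fin d) (Fin d) ℝ)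
    (hV : Vᵀ * V = 1) (hV' : V * Vᵀ = 1) (hVt : Vtᵀ * Vt = 1) (hVt' : Vt * Vtᵀ = 1)
    (hdiag : ∀ i, (Vᵀ * Vt) i i ∈ Set.Icc (1 - ε) (1 + ε)) :
    let S₁ : Matrix (Fin d) (Fin d) ℝ :=
      Matrix.diagonal (fun i => if (i : ℕ) < d_y then s i ^ 2 / σ ^ 2 + 1 else 1)
    let S₂ : Matrix (Fin d) (Fin d) ℝ :=
      Matrix.diagonal (fun i => if (i : ℕ) < d_y then σ ^ 2 / (st i ^ 2 + σ ^ 2) else 1)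
    let Δ : Matrix (Fin d) (Fin d) ℝ := Vᵀ * Vt - 1
    ((V * S₁ * Vᵀ) * (Vt * S₂ * Vtᵀ)).trace - (S₁ * Δ * S₂ * Δᵀ).trace - d ≤
      (1 + 2 * ε) *
          ∑ i ∈ Finset.univ.filter (fun i : Fin d => (i : ℕ) < d_y),
            (s i ^ 2 - st i ^ 2) / (st i ^ 2 + σ ^ 2) +
        2 * ε * d :=
  trace_bound_approx_general s st σ ε hσ V Vt hdiag
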